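/- For all integers l ≥ 1 and m ≥ 2, the set of singular points of the projective plane curve {[x:y:z] ∈ ℂℙ² : x·(y·x^l + z^{l+1})^m − z^{(l+1)·m+1} = 0} is exactly {[0:1:0], [1:0:0]}; that is, a point P of ℂℙ² satisfies G_{l,m}(P) = 0 together with the vanishing of all three partial derivatives of G_{l,m} at P (on any homogeneous representative) if and only if P = [0:1:0] or P = [1:0:0]. -/

import Mathlib

/-!
Write `u = y·x^l + z^{l+1}`, so that `∂G/∂y = m·x^{l+1}·u^{m-1}` and
`∂G/∂x = u^m + m·l·y·x^l·u^{m-1}`. At a singular point `∂G/∂y = 0` gives `x = 0` or `u = 0`,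
and `x = 0` turns `∂G/∂x` into `u^m`, so `u = 0` in any case. Then `G = -z^{(l+1)m+1}` forces
`z = 0`, and `u = y·x^l = 0` forces `xy = 0`. Conversely every vector with `z = 0` and `xy = 0`
is singular, and the points with these coordinates are exactly `[0:1:0]` and `[1:0:0]`.
-/

open MvPolynomial Projectivization

/-- The polynomial `G_{l,m} = x·(y·x^l + z^{l+1})^m − z^{(l+1)·m + 1}` in `ℂ[x,y,z]`,
with variables `x = X 0`, `y = X 1`, `z = X 2`. -/
noncomputable def Gpoly (l m : ℕ) : MvPolynomial (Fin 3) ℂ :=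
  X 0 * (X 1 * X 0 ^ l + X 2 ^ (l + 1)) ^ m - X 2 ^ ((l + 1) * m + 1)

section Evaluation

variable (l m : ℕ) (v : Fin 3 → ℂ)

lemma eval_Gpoly :
    eval v (Gpoly l m) = v 0 * (v 1 * v 0 ^ l + v 2 ^ (l + 1)) ^ m - v 2 ^ ((l + 1) * m + 1) := by
  simp [Gpoly]

lemma eval_pderiv_zero_Gpoly :
    eval v (pderiv 0 (Gpoly l m)) =
      (v 1 * v 0 ^ l + v 2 ^ (l + 1)) ^ m
        + m * l * v 1 * v 0 ^ l * (v 1 * v 0 ^ l + v 2 ^ (l + 1)) ^ (m - 1) := by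
  -- `pderiv` produces `l • x ^ (l - 1)`, which only combines with `x` to `x ^ l` for `l ≥ 1`.
  rcases l with _ | l
  · simp [Gpoly]
  · simp [Gpoly]
    ring

lemma eval_pderiv_one_Gpoly :
    eval v (pderiv 1 (Gpoly l m)) =
      m * v 0 ^ (l + 1) * (v 1 * v 0 ^ l + v 2 ^ (l + 1)) ^ (m - 1) := by
  simp [Gpoly]
  ring

lemma eval_pderiv_two_Gpoly :
    eval v (pderiv 2 (Gpoly l m)) =
      m * (l + 1) * v 0 * v 2 ^ l * (v 1 * v 0 ^ l + v 2 ^ (l + 1)) ^ (m - 1)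
        - ((l + 1) * m + 1 : ℂ) * v 2 ^ ((l + 1) * m) := by
  simp [Gpoly]
  ring

end Evaluation

lemma singular_Gpoly_iff {l m : ℕ} (hl : 1 ≤ l) (hm : 2 ≤ m) (v : Fin 3 → ℂ) :
    (eval v (Gpoly l m) = 0 ∧ eval v (pderiv 0 (Gpoly l m)) = 0 ∧
      eval v (pderiv 1 (Gpoly l m)) = 0 ∧ eval v (pderiv 2 (Gpoly l m)) = 0) ↔
      v 2 = 0 ∧ v 0 * v 1 = 0 := by
  rw [eval_Gpoly, eval_pderiv_zero_Gpoly, eval_pderiv_one_Gpoly, eval_pderiv_two_Gpoly]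
  set u := v 1 * v 0 ^ l + v 2 ^ (l + 1) with hu
  have hl0 : l ≠ 0 := by omega
  have hm0 : m ≠ 0 := by omega
  have hm1 : m - 1 ≠ 0 := by omega
  constructor
  · rintro ⟨hG, hx, hy, -⟩
    have hu0 : u = 0 := by
      rcases mul_eq_zero.1 hy with hy | hy
      · have hx0 : v 0 = 0 := by simpa [hm0] using hy
        simpa [hx0, hl0, hm0] using hx
      · exact pow_eq_zero_iff hm1 |>.1 hy
    have hz : v 2 = 0 := by simpa [hu0, hm0] using hG
    refine ⟨hz, ?_⟩
    simpa [hz, hl0, hu, or_comm] using hu0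
  · rintro ⟨hz, hxy⟩
    have hu0 : u = 0 := by rcases mul_eq_zero.1 hxy with h | h <;> simp [hu, hz, h, hl0]
    simp [hu0, hz, hm0, hm1]

theorem rep_two_eq_zero_and_rep_zero_mul_rep_one_eq_zero_iff {K : Type*} [Field K]
    (P : Projectivization K (Fin 3 → K)) :
    P.rep 2 = 0 ∧ P.rep 0 * P.rep 1 = 0 ↔
      P = mk K (![0, 1, 0] : Fin 3 → K) (fun h => by simpa using congrFun h 1) ∨
        P = mk K (![1, 0, 0] : Fin 3 → K) (fun h => by simpa using congrFun h 0) := by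
  conv_rhs => rw [← P.mk_rep]
  simp only [mk_eq_mk_iff']
  constructor
  · rintro ⟨hz, hxy⟩
    rcases mul_eq_zero.1 hxy with hx | hy
    · exact Or.inl ⟨P.rep 1, by ext i; fin_cases i <;> simp [hx, hz]⟩
    · exact Or.inr ⟨P.rep 0, by ext i; fin_cases i <;> simp [hy, hz]⟩
  · rintro (⟨a, ha⟩ | ⟨a, ha⟩) <;> simp [← ha]

/-- The set of singular points of the projective plane curve `{G_{l,m} = 0}`
is exactly `{[0:1:0], [1:0:0]}`.  (Vanishing of the homogeneous polynomial `G_{l,m}` and of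
its partial derivatives at a point of `ℂℙ²` is tested on the chosen representative `P.rep`;
it is invariant under scaling of the representative.) -/
theorem stmt_5 (l m : ℕ) (hl : 1 ≤ l) (hm : 2 ≤ m) :
    {P : Projectivization ℂ (Fin 3 → ℂ) |
        eval P.rep (Gpoly l m) = 0 ∧
        eval P.rep (pderiv 0 (Gpoly l m)) = 0 ∧
        eval P.rep (pderiv 1 (Gpoly l m)) = 0 ∧
        eval P.rep (pderiv 2 (Gpoly l m)) = 0} =
      {Projectivization.mk ℂ ![0, 1, 0] (fun h => by simpa using congrFun h 1),
       Projectivization.mk ℂ ![1, 0, 0] (fun h => by simpa using congrFun h 0)} := by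
  ext P
  simp only [Set.mem_ofPred_eq, Set.mem_insert_iff, Set.mem_singleton_iff]
  exact (singular_Gpoly_iff hl hm P.rep).trans
    (rep_two_eq_zero_and_rep_zero_mul_rep_one_eq_zero_iff P)
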